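/- Let T be an oriented tree of order k and let D be a directed acyclic graph with chromatic number χ(D) ≥ k. Then D contains T as a subdigraph. -/

import Mathlib

/-- The underlying simple graph of a digraph: `u` and `v` are adjacent if they are distinct
and there is an arc between them in some direction. -/
def Digraph.toSG {V : Type*} (D : Digraph V) : SimpleGraph V where
  Adj u v := u ≠ v ∧ (D.Adj u v ∨ D.Adj v u)
  symm := by constructor; intro u v h; exact ⟨Ne.symm h.1, h.2.symm⟩
  loopless := by constructor; intro v h; exact h.1 rfl

/-- The chromatic number of a digraph is that of its underlying simple graph. -/
noncomputable def Digraph.chromNum {V : Type*} (D : Digraph V) : ℕ∞ :=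
  D.toSG.chromaticNumber

/-- `D` contains a copy of `H` as a subdigraph. -/
def Digraph.Contains {V W : Type*} (D : Digraph V) (H : Digraph W) : Prop :=
  ∃ f : W → V, Function.Injective f ∧ ∀ u v, H.Adj u v → D.Adj (f u) (f v)

/-- The subdigraph of `D` induced on a set `S` of vertices. -/
def Digraph.induce {V : Type*} (D : Digraph V) (S : Set V) : Digraph S :=
  ⟨fun a b => D.Adj a b⟩

/-- A digraph `T` is `c`-universal if every digraph `D` whose chromatic number is
at least `c` contains `T` as a subdigraph. -/
def IsUniversal {V : Type} (T : Digraph V) (c : ℝ) : Prop :=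
  ∀ (W : Type) (D : Digraph W), (⌈c⌉₊ : ℕ∞) ≤ D.chromNum → D.Contains T

/-- An oriented tree: an orientation of a tree (no digons/loops, underlying graph a tree). -/
def IsOrientedTree {V : Type*} (T : Digraph V) : Prop :=
  (∀ u v, T.Adj u v → ¬ T.Adj v u) ∧ T.toSG.IsTree

/-- A directed acyclic graph: a digraph with no directed cycle. -/
def Digraph.IsDAG {V : Type*} (D : Digraph V) : Prop :=
  ∀ v, ¬ Relation.TransGen D.Adj v v

/-!
Induction on the order of the tree, removing a leaf `l` with neighbour `p`; reversing all arcs,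
we may assume the arc is `p → l`. A finite DAG has a kernel `A`: an independent set such that
every vertex outside `A` has an out-neighbour in `A`. Deleting `A` costs at most one colour, so
the smaller tree embeds in `D - A`, and an out-neighbour in `A` of the image of `p` receives `l`.
Infinite DAGs reduce to finite ones by the de Bruijn–Erdős compactness theorem.
-/

theorem WellFounded.exists_kernel {α : Type*} {r : α → α → Prop}
    (hr : WellFounded (flip r)) :
    ∃ A : Set α, ∀ a, a ∈ A ↔ ∀ b, r a b → b ∉ A := by
  let inA : α → Prop := hr.fix fun a ih => ∀ b (hab : r a b), ¬ ih b hab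
  exact ⟨{a | inA a}, fun a => Iff.of_eq (hr.fix_eq _ a)⟩

namespace SimpleGraph

variable {V : Type*} {G : SimpleGraph V}

theorem exists_finite_induce_not_colorable {n : ℕ} (h : ¬ G.Colorable n) :
    ∃ s : Set V, s.Finite ∧ ¬ (G.induce s).Colorable n := by
  by_contra! hfin
  refine h (nonempty_hom_of_forall_finite_subgraph_hom fun G' hG' => ?_)
  exact RelHom.comp (hfin G'.verts hG').some ⟨id, G'.adj_sub⟩

theorem Colorable.succ_of_induce_compl {A : Set V} (hA : G.IsIndepSet A) {n : ℕ}
    (h : (G.induce Aᶜ).Colorable n) : G.Colorable (n + 1) := by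
  classical
  obtain ⟨c⟩ := h
  let c' : V → Option (Fin n) := fun v => if hv : v ∈ A then none else some (c ⟨v, hv⟩)
  have hc' : ∀ {u v}, G.Adj u v → c' u ≠ c' v := by
    intro u v huv
    by_cases hu : u ∈ A <;> by_cases hv : v ∈ A <;>
      simp only [c', hu, hv, ↓reduceDIte, ne_eq, not_true_eq_false, reduceCtorEq,
        not_false_eq_true, Option.some.injEq]
    · exact hA hu hv huv.ne huv
    · exact c.valid huv
  simpa using (Coloring.mk c' hc').colorable

theorem IsTree.exists_leaf [Finite V] [Nontrivial V] (hG : G.IsTree) :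
    ∃ l p, G.Adj l p ∧ (∀ u, G.Adj l u → u = p) ∧ (G.induce {l}ᶜ).IsTree := by
  classical
  have := Fintype.ofFinite V
  obtain ⟨l, hl⟩ := hG.exists_vert_degree_one_of_nontrivial
  obtain ⟨p, hlp, hp⟩ := degree_eq_one_iff_existsUnique_adj.mp hl
  exact ⟨l, p, hlp, hp, hG.connected.induce_compl_singleton_of_degree_eq_one hl,
    hG.isAcyclic.induce _⟩

end SimpleGraph

namespace Digraph

variable {V W : Type*}

def reverse (D : Digraph V) : Digraph V := ⟨flip D.Adj⟩

@[simp]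
theorem toSG_reverse (D : Digraph V) : D.reverse.toSG = D.toSG := by
  ext u v
  simp only [toSG, reverse, flip, ne_eq]
  tauto

theorem toSG_induce (D : Digraph V) (S : Set V) : (D.induce S).toSG = D.toSG.induce S := by
  ext u v
  simp [toSG, induce, Subtype.ext_iff]

theorem Contains.reverse {D : Digraph W} {T : Digraph V} (h : D.Contains T) :
    D.reverse.Contains T.reverse :=
  let ⟨f, hf, hadj⟩ := h
  ⟨f, hf, fun u v huv => hadj v u huv⟩

theorem Contains.of_induce {D : Digraph W} {S : Set W} {T : Digraph V}
    (h : (D.induce S).Contains T) : D.Contains T :=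
  let ⟨f, hf, hadj⟩ := h
  ⟨Subtype.val ∘ f, Subtype.val_injective.comp hf, hadj⟩

theorem IsDAG.reverse {D : Digraph V} (hD : D.IsDAG) : D.reverse.IsDAG :=
  fun v hv => hD v (Relation.transGen_swap.mp hv)

theorem IsDAG.induce {D : Digraph V} (hD : D.IsDAG) (S : Set V) : (D.induce S).IsDAG :=
  fun v hv => hD v (hv.lift Subtype.val fun _ _ h => h)

theorem IsDAG.wellFounded_flip [Finite V] {D : Digraph V} (hD : D.IsDAG) :
    WellFounded (flip D.Adj) :=
  have : IsTrans V (Relation.TransGen (flip D.Adj)) := ⟨fun _ _ _ => .trans⟩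
  have : Std.Irrefl (Relation.TransGen (flip D.Adj)) :=
    ⟨fun v hv => hD v (Relation.transGen_swap.mp hv)⟩
  Subrelation.wf Relation.TransGen.single (Finite.wellFounded_of_trans_of_irrefl _)

theorem Contains.extend_out_leaf {D : Digraph W} {T : Digraph V}
    (hT : ∀ u v, T.Adj u v → ¬ T.Adj v u) {l p : V} (hleaf : ∀ u, T.toSG.Adj l u → u = p)
    (hpl : T.Adj p l) {A : Set W} (hA : ∀ w ∉ A, ∃ a ∈ A, D.Adj w a)
    (h : (D.induce Aᶜ).Contains (T.induce {l}ᶜ)) : D.Contains T := by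
  classical
  obtain ⟨f, hf, hadj⟩ := h
  have hpl_ne : p ≠ l := fun h => hT p p (h ▸ hpl) (h ▸ hpl)
  obtain ⟨a, haA, hfa⟩ := hA _ (f ⟨p, hpl_ne⟩).2
  let g : V → W := fun v => if hv : v = l then a else f ⟨v, hv⟩
  refine ⟨g, fun u v huv => ?_, fun u v huv => ?_⟩
  · by_cases hu : u = l <;> by_cases hv : v = l <;>
      simp only [g, hu, hv, dite_true, dite_false] at huv
    · exact hu.trans hv.symm
    · exact absurd (huv ▸ haA) (f ⟨v, hv⟩).2
    · exact absurd (huv ▸ haA) (f ⟨u, hu⟩).2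
    · exact congrArg Subtype.val (hf (Subtype.val_injective huv))
  · by_cases hu : u = l <;> by_cases hv : v = l
    · rw [hu, hv] at huv
      exact absurd huv (fun h => hT l l h h)
    · rw [hu] at huv
      rw [hleaf v ⟨Ne.symm hv, .inl huv⟩] at huv
      exact absurd huv (hT p l hpl)
    · rw [hv] at huv
      obtain rfl := hleaf u ⟨Ne.symm hu, .inr huv⟩
      simpa [g, hv, hu] using hfa
    · simp only [g, hu, hv, dite_false]
      exact hadj ⟨u, hu⟩ ⟨v, hv⟩ huv

end Digraph

theorem IsOrientedTree.reverse {V : Type*} {T : Digraph V} (hT : IsOrientedTree T) :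
    IsOrientedTree T.reverse :=
  ⟨fun u v huv hvu => hT.1 u v hvu huv, T.toSG_reverse ▸ hT.2⟩

theorem Digraph.IsDAG.contains_of_not_colorable {W : Type*} [Finite W] {D : Digraph W}
    (hD : D.IsDAG) {V : Type*} [Finite V] {T : Digraph V} (hT : IsOrientedTree T) {n : ℕ}
    (hV : Nat.card V ≤ n + 1) (hcol : ¬ D.toSG.Colorable n) : D.Contains T := by
  induction V using Finite.induction_subsingleton_or_nontrivial generalizing W n with
  | hbase V =>
    obtain ⟨w⟩ : Nonempty W := not_isEmpty_iff.mp fun _ => hcol (.of_isEmpty n)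
    exact ⟨fun _ => w, fun u v _ => Subsingleton.elim u v,
      fun u v huv => absurd huv (Subsingleton.elim u v ▸ fun h => hT.1 u u h h)⟩
  | hstep V ih =>
    obtain ⟨l, p, hlp, hleaf, htree⟩ := hT.2.exists_leaf
    have hlV : Nat.card ({l}ᶜ : Set V) < Nat.card V :=
      Finite.card_subtype_lt (x := l) (by simp)
    obtain ⟨m, rfl⟩ : ∃ m, n = m + 1 :=
      Nat.exists_eq_add_one.mpr (by have := Finite.one_lt_card (α := V); omega)
    wlog hpl : T.Adj p l generalizing T D
    · simp_rw [← T.toSG_reverse, ← D.toSG_reverse] at hlp hleaf htree hcol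
      exact (this hD.reverse hT.reverse hlp hleaf htree hcol (hlp.2.resolve_left hpl)).reverse
    obtain ⟨A, hA⟩ := hD.wellFounded_flip.exists_kernel
    have hA_indep : D.toSG.IsIndepSet A := fun a ha b hb _ hab =>
      hab.2.elim (fun h => (hA a).mp ha b h hb) (fun h => (hA b).mp hb a h ha)
    have hA_absorb : ∀ w ∉ A, ∃ a ∈ A, D.Adj w a := fun w hw => by
      simpa [hA w, and_comm] using hw
    have hcol' : ¬ (D.induce Aᶜ).toSG.Colorable m := fun h =>
      hcol ((D.toSG_induce Aᶜ ▸ h).succ_of_induce_compl hA_indep)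
    exact Contains.extend_out_leaf hT.1 hleaf hpl hA_absorb
      (ih ({l}ᶜ : Set V) hlV (hD.induce Aᶜ) ⟨fun u v => hT.1 u v, T.toSG_induce _ ▸ htree⟩
        (by omega) hcol')

/-- Every oriented tree of order `k` is contained in every DAG of chromatic number
at least `k`. -/
theorem oriented_tree_in_dag (k : ℕ) {V : Type} [Fintype V] (T : Digraph V)
    (hT : IsOrientedTree T) (hcard : Fintype.card V = k)
    {W : Type} (D : Digraph W) (hdag : D.IsDAG) (hchrom : (k : ℕ∞) ≤ D.chromNum) :
    D.Contains T := by
  obtain _ | k := k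
  · have : IsEmpty V := Fintype.card_eq_zero_iff.mp hcard
    exact ⟨isEmptyElim, fun u => isEmptyElim u, fun u => isEmptyElim u⟩
  have hcol : ¬ D.toSG.Colorable k := fun h => by
    have : ((k + 1 : ℕ) : ℕ∞) ≤ k := hchrom.trans h.chromaticNumber_le
    norm_cast at this
    omega
  obtain ⟨s, hs, hscol⟩ := SimpleGraph.exists_finite_induce_not_colorable hcol
  have : Finite s := hs
  rw [← D.toSG_induce] at hscol
  exact ((hdag.induce s).contains_of_not_colorable hT (by simp [Nat.card_eq_fintype_card, hcard])
    hscol).of_induce
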